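/- Define g(λ,w) = e^λ B(λ+w) - e^λ B(λ) - B(w) + 1 - w(e^λ - 1), where B(w) = w/(1-e^{-w}) for w ≠ 0 and B(0)=1. Then g(λ,w) ≤ 0 for all λ ≥ 0 and w ≥ 0. -/

import Mathlib

noncomputable def B : ℝ → ℝ := fun w => if w = 0 then 1 else w / (1 - Real.exp (-w))

/-!
For `x ≠ 0`, `B x = x eˣ / (eˣ - 1)`. Writing `a = e^λ`, `b = e^w` and clearing the positive
denominators `(ab - 1)(a - 1)(b - 1)`, the claim becomes the polynomial inequality
`(ab - 1)(a - 1)(b - 1) ≤ a² λ (b - 1)² + w (a - 1)²`. It follows from `x ≥ 2 tanh (x / 2)`,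
i.e. `2 (eˣ - 1) ≤ x (eˣ + 1)` for `x ≥ 0`, applied to `λ` and to `w`.
-/

open Real

lemma two_mul_exp_sub_one_le {x : ℝ} (hx : 0 ≤ x) : 2 * (exp x - 1) ≤ x * (exp x + 1) := by
  let f : ℝ → ℝ := fun t => t * (exp t + 1) - 2 * (exp t - 1)
  have hf : ∀ t, HasDerivAt f ((t - 1) * exp t + 1) t := fun t =>
    (((hasDerivAt_id t).mul ((hasDerivAt_exp t).add_const 1)).sub
      (((hasDerivAt_exp t).sub_const 1).const_mul 2)).congr_deriv (by simp; ring)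
  have hf' : ∀ t, 0 ≤ (t - 1) * exp t + 1 := fun t => by
    have h := add_one_le_exp (-t)
    rw [exp_neg] at h
    nlinarith [mul_inv_cancel₀ (exp_pos t).ne', exp_pos t]
  simpa [f] using monotone_of_hasDerivAt_nonneg hf hf' hx

lemma B_of_ne_zero {x : ℝ} (hx : x ≠ 0) : B x = x * exp x / (exp x - 1) := by
  have hex : exp x - 1 ≠ 0 := sub_ne_zero.mpr ((exp_eq_one_iff x).not.mpr hx)
  rw [B, if_neg hx, exp_neg]
  field_simp

lemma sub_one_mul_sub_one_mul_le_of_two_mul_sub_one_le {a b lam w : ℝ} (ha : 1 < a) (hb : 1 < b)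
    (hlam : 2 * (a - 1) ≤ lam * (a + 1)) (hw : 2 * (b - 1) ≤ w * (b + 1)) :
    (a * b - 1) * (a - 1) * (b - 1) ≤ a ^ 2 * lam * (b - 1) ^ 2 + w * (a - 1) ^ 2 := by
  have ha' : 0 < a - 1 := by linarith
  have hb' : 0 < b - 1 := by linarith
  have hab : 0 < a * b - 1 := by nlinarith
  have h1 := mul_le_mul_of_nonneg_right hlam (by positivity : 0 ≤ a ^ 2 * (b - 1) ^ 2 * (b + 1))
  have h2 := mul_le_mul_of_nonneg_right hw (by positivity : 0 ≤ (a - 1) ^ 2 * (a + 1))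
  -- after multiplying by `(a + 1)(b + 1)`, the slack is `(a - 1)²(b - 1)²(ab - 1) ≥ 0`
  have h3 : 0 ≤ (a - 1) ^ 2 * (b - 1) ^ 2 * (a * b - 1) := by positivity
  refine le_of_mul_le_mul_right ?_ (by positivity : 0 < (a + 1) * (b + 1))
  nlinarith

theorem gB_nonpos (lam w : ℝ) (hlam : 0 ≤ lam) (hw : 0 ≤ w) :
    Real.exp lam * B (lam + w) - Real.exp lam * B lam - B w + 1
      - w * (Real.exp lam - 1) ≤ 0 := by
  rcases hlam.eq_or_lt with rfl | hlam'
  · simp [B]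
  rcases hw.eq_or_lt with rfl | hw'
  · simp [B]
  rw [B_of_ne_zero (by positivity), B_of_ne_zero hlam'.ne', B_of_ne_zero hw'.ne', exp_add]
  have key := sub_one_mul_sub_one_mul_le_of_two_mul_sub_one_le (one_lt_exp_iff.mpr hlam')
    (one_lt_exp_iff.mpr hw') (two_mul_exp_sub_one_le hlam) (two_mul_exp_sub_one_le hw)
  set a := exp lam
  set b := exp w
  have ha : 0 < a - 1 := sub_pos.mpr (one_lt_exp_iff.mpr hlam')
  have hb : 0 < b - 1 := sub_pos.mpr (one_lt_exp_iff.mpr hw')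
  have hab : 0 < a * b - 1 := by nlinarith
  calc _ = ((a * b - 1) * (a - 1) * (b - 1) - (a ^ 2 * lam * (b - 1) ^ 2 + w * (a - 1) ^ 2)) /
          ((a * b - 1) * (a - 1) * (b - 1)) := by
        field_simp [ha.ne', hb.ne', hab.ne']
        ring
    _ ≤ 0 := div_nonpos_of_nonpos_of_nonneg (sub_nonpos.mpr key) (by positivity)
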